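/- arXiv:2208.04443 — 5 statements merged into one kernel-verified Lean document; each statement's English description precedes it below -/
import Mathlib

section
/- Let Y be any matrix in sl_2(R), let J be the 2×2 rotation generator with rows (0,-1),(1,0), and let R = exp(Jπ/3). Then J·Y + (R²)ᵗ·J·Y·R² + (R⁴)ᵗ·J·Y·R⁴ = (3/2)·trace(J·Y)·I_2. -/
open Matrix

noncomputable def cMat : ℂ →+* Matrix (Fin 2) (Fin 2) ℝ where
  toFun z := !![z.re, -z.im; z.im, z.re]
  map_one' := by ext i j; fin_cases i <;> fin_cases j <;> simp
  map_mul' z w := by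
    ext i j; fin_cases i <;> fin_cases j <;>
      (simp [Matrix.mul_apply, Fin.sum_univ_succ, Complex.mul_re, Complex.mul_im]; try ring)
  map_zero' := by ext i j; fin_cases i <;> fin_cases j <;> simp
  map_add' z w := by
    ext i j; fin_cases i <;> fin_cases j <;>
      (simp [Complex.add_re, Complex.add_im]; try ring)

lemma cMat_continuous : Continuous cMat := by
  apply continuous_matrix
  intro i j
  fin_cases i <;> fin_cases j <;>
    simp only [cMat, RingHom.coe_mk, MonoidHom.coe_mk, OneHom.coe_mk] <;>
    simp <;> fun_prop

set_option maxHeartbeats 1000000 in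
theorem rotation_average_identity (Y : Matrix (Fin 2) (Fin 2) ℝ) (hY : Y.trace = 0)
    (J R : Matrix (Fin 2) (Fin 2) ℝ) (hJ : J = !![0, -1; 1, 0])
    (hR : R = NormedSpace.exp ((Real.pi / 3) • J)) :
    J * Y + (R ^ 2)ᵀ * J * Y * R ^ 2 + (R ^ 4)ᵀ * J * Y * R ^ 4 =
      (3 / 2 * (J * Y).trace) • (1 : Matrix (Fin 2) (Fin 2) ℝ) := by
  have hJc : J = cMat Complex.I := by
    ext i j; fin_cases i <;> fin_cases j <;> simp [hJ, cMat]
  have hsmul : (Real.pi / 3) • J = cMat ((Real.pi / 3 : ℝ) * Complex.I) := by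
    ext i j; fin_cases i <;> fin_cases j <;> simp [hJc, cMat]
  have hRval : R = !![1/2, -(Real.sqrt 3 / 2); Real.sqrt 3 / 2, 1/2] := by
    letI : SeminormedRing (Matrix (Fin 2) (Fin 2) ℝ) := Matrix.linftyOpSemiNormedRing
    letI : NormedRing (Matrix (Fin 2) (Fin 2) ℝ) := Matrix.linftyOpNormedRing
    letI : NormedAlgebra ℝ (Matrix (Fin 2) (Fin 2) ℝ) := Matrix.linftyOpNormedAlgebra
    rw [hR, hsmul]
    erw [← NormedSpace.map_exp cMat cMat_continuous]
    have : NormedSpace.exp ((Real.pi / 3 : ℝ) * Complex.I)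
        = Complex.exp ((Real.pi / 3 : ℝ) * Complex.I) := by
      rw [← Complex.exp_eq_exp_ℂ]
    rw [this, Complex.exp_mul_I]
    have hc : Real.cos (Real.pi / 3) = 1 / 2 := Real.cos_pi_div_three
    have hs : Real.sin (Real.pi / 3) = Real.sqrt 3 / 2 := Real.sin_pi_div_three
    have hcast : ((Real.pi : ℂ) / 3) = ((Real.pi / 3 : ℝ) : ℂ) := by push_cast; ring
    have h1 : (Complex.cos ((Real.pi : ℂ) / 3)).re = 1 / 2 := by
      rw [hcast, Complex.cos_ofReal_re, hc]
    have h2 : (Complex.cos ((Real.pi : ℂ) / 3)).im = 0 := by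
      rw [hcast, Complex.cos_ofReal_im]
    have h3 : (Complex.sin ((Real.pi : ℂ) / 3)).re = Real.sqrt 3 / 2 := by
      rw [hcast, Complex.sin_ofReal_re, hs]
    have h4 : (Complex.sin ((Real.pi : ℂ) / 3)).im = 0 := by
      rw [hcast, Complex.sin_ofReal_im]
    ext i j
    fin_cases i <;> fin_cases j <;>
      simp [cMat, Complex.add_re, Complex.add_im, h1, h2, h3, h4]
  have h3 : Real.sqrt 3 * Real.sqrt 3 = 3 := Real.mul_self_sqrt (by norm_num)
  have hY11 : Y 1 1 = - Y 0 0 := by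
    have := hY
    simp [Matrix.trace, Fin.sum_univ_succ, Matrix.diag] at this
    linarith
  have hR2 : R ^ 2 = !![-(1/2), -(Real.sqrt 3 / 2); Real.sqrt 3 / 2, -(1/2)] := by
    rw [sq, hRval]
    ext i j
    fin_cases i <;> fin_cases j <;>
      (simp [Matrix.mul_apply, Fin.sum_univ_succ]; nlinarith [h3])
  have hR4 : R ^ 4 = !![-(1/2), Real.sqrt 3 / 2; -(Real.sqrt 3 / 2), -(1/2)] := by
    rw [show (4:ℕ) = 2 + 2 by norm_num, pow_add, hR2]
    ext i j
    fin_cases i <;> fin_cases j <;>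
      (simp [Matrix.mul_apply, Fin.sum_univ_succ]; nlinarith [h3])
  ext i j
  fin_cases i <;> fin_cases j <;>
    (simp [hR2, hR4, hJ, Matrix.mul_apply, Matrix.vecMul, dotProduct,
      Fin.sum_univ_succ, Matrix.trace,
      Matrix.diag, Matrix.one_apply, hY11, Matrix.smul_apply];
     ring_nf;
     simp only [Real.sq_sqrt (by norm_num : (0:ℝ) ≤ 3)];
     ring_nf)
end

section
/- Consider the ODE system on C³ given by z₃' = z₂, z₂' = z₁, z₁' = -i·z₃/|z₃|. The curves z₃(t) = t^{3-i}/10, z₂(t) = (3-i)·t^{2-i}/10, z₁(t) = (2-i)(3-i)·t^{1-i}/10 (for t > 0, with t^{s} := exp(s·log t)) solve this system. -/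
open Complex

lemma key_deriv (s : ℂ) {t : ℝ} (ht : 0 < t) :
    HasDerivAt (fun t : ℝ => Complex.exp (s * Real.log t))
      (s * Complex.exp ((s - 1) * Real.log t)) t := by
  have hl : HasDerivAt (fun t : ℝ => ((Real.log t : ℂ))) ((t⁻¹ : ℝ) : ℂ) t :=
    (Real.hasDerivAt_log ht.ne').ofReal_comp
  have h := (hl.const_mul s).cexp
  convert h using 1
  have hexp : Complex.exp ((Real.log t : ℂ)) = (t : ℂ) := by
    rw [← Complex.ofReal_exp, Real.exp_log ht]
  rw [sub_mul, one_mul, Complex.exp_sub, hexp]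
  have htne : (t : ℂ) ≠ 0 := by exact_mod_cast ht.ne'
  field_simp
  rw [one_div, Complex.ofReal_inv, mul_inv_cancel_right₀ htne]

theorem log_spiral_solves_fuller_system
    (z₃ z₂ z₁ : ℝ → ℂ)
    (h₃ : ∀ t : ℝ, z₃ t = Complex.exp ((3 - Complex.I) * Real.log t) / 10)
    (h₂ : ∀ t : ℝ, z₂ t = (3 - Complex.I) * Complex.exp ((2 - Complex.I) * Real.log t) / 10)
    (h₁ : ∀ t : ℝ, z₁ t =
      (2 - Complex.I) * (3 - Complex.I) * Complex.exp ((1 - Complex.I) * Real.log t) / 10) :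
    ∀ t : ℝ, 0 < t →
      HasDerivAt z₃ (z₂ t) t ∧ HasDerivAt z₂ (z₁ t) t ∧
        HasDerivAt z₁ (-Complex.I * z₃ t / (‖z₃ t‖ : ℝ)) t := by
  intro t ht
  have hf₃ : z₃ = fun t : ℝ => Complex.exp ((3 - Complex.I) * Real.log t) / 10 := funext h₃
  have hf₂ : z₂ = fun t : ℝ =>
      (3 - Complex.I) * Complex.exp ((2 - Complex.I) * Real.log t) / 10 := funext h₂
  have hf₁ : z₁ = fun t : ℝ =>
      (2 - Complex.I) * (3 - Complex.I) * Complex.exp ((1 - Complex.I) * Real.log t) / 10 :=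
    funext h₁
  have hL : Complex.exp ((Real.log t : ℂ)) = (t : ℂ) := by
    rw [← Complex.ofReal_exp, Real.exp_log ht]
  refine ⟨?_, ?_, ?_⟩
  · rw [hf₃, h₂]
    have e : (3 : ℂ) - Complex.I - 1 = 2 - Complex.I := by ring
    have := (key_deriv (3 - Complex.I) ht).div_const 10
    rw [e] at this
    exact this
  · rw [hf₂, h₁]
    have e : (2 : ℂ) - Complex.I - 1 = 1 - Complex.I := by ring
    have := (((key_deriv (2 - Complex.I) ht).const_mul (3 - Complex.I)).div_const 10)
    rw [e] at this
    refine this.congr_deriv ?_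
    ring
  · rw [hf₁, h₃]
    have habs : ‖(Complex.exp ((3 - Complex.I) * Real.log t) / 10 : ℂ)‖
        = t ^ 3 / 10 := by
      rw [norm_div, Complex.norm_exp]
      norm_num
      rw [show (3 : ℝ) * Real.log t = Real.log (t ^ 3) by rw [Real.log_pow]; push_cast; ring,
        Real.exp_log (by positivity)]
    rw [habs]
    have h3L : Complex.exp ((3 - Complex.I) * Real.log t)
        = (t : ℂ) ^ 3 * Complex.exp (-Complex.I * Real.log t) := by
      rw [show (3 - Complex.I) * (Real.log t : ℂ)
          = (Real.log t : ℂ) + ((Real.log t : ℂ) + ((Real.log t : ℂ) + -Complex.I * Real.log t))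
          by ring, Complex.exp_add, Complex.exp_add, Complex.exp_add, hL]
      ring
    have := (((key_deriv (1 - Complex.I) ht).const_mul
        ((2 - Complex.I) * (3 - Complex.I))).div_const 10)
    refine this.congr_deriv (Eq.symm ?_)
    rw [show (1 : ℂ) - Complex.I - 1 = -Complex.I by ring, h3L]
    have ht3 : ((t : ℝ) ^ 3 : ℂ) ≠ 0 := by
      push_cast
      exact pow_ne_zero 3 (by exact_mod_cast ht.ne')
    push_cast
    field_simp
    linear_combination (10 * (t : ℂ) ^ 3 * Complex.exp (-(Complex.I * (Real.log t : ℂ))) * Complex.I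
      - 60 * (t : ℂ) ^ 3 * Complex.exp (-(Complex.I * (Real.log t : ℂ)))) * Complex.I_sq
      + (-10 * Complex.I) * mul_inv_cancel₀ (show (t : ℂ) ≠ 0 by exact_mod_cast ht.ne')
      + ((Complex.I - 6) + (60 - 10 * Complex.I) * (t : ℂ) ^ 3
        * Complex.exp (-(Complex.I * (Real.log t : ℂ)))) * Complex.I_sq
end

section
/- Let f : (0,ε) → C be differentiable with valuation val(f) = k ≥ 1 at 0 (i.e., k is minimal with lim_{t→0⁺} f(t)/t^k existing and nonzero), and suppose lim_{t→0⁺} f'(t)/t^{k-1} exists. Then val(f') = k - 1 and lim_{t→0⁺} f'(t)/t^{k-1} = k·lim_{t→0⁺} f(t)/t^k. -/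
/-!
Subtracting the expected leading term, `g t = f t - L / k * t ^ k` tends to `0` at `0⁺` and
has derivative `o(t ^ (k - 1))`; the mean value inequality on `[s, t]`, with `s → 0⁺`, then
gives `g t = o(t ^ k)`, so `f t / t ^ k → L / k`. This one-sided L'Hôpital rule also shows
that a nonzero limit of `f' t / t ^ j` for `j < k - 1` would produce one of `f t / t ^ (j + 1)`,
against the minimality of `k`.
-/

open Filter Topology

/-- `f` has valuation `k` at `0`: `k` is the least nonnegative integer such that
`f t / t ^ k` tends to a nonzero limit as `t → 0⁺`. -/
def HasValuation (f : ℝ → ℂ) (k : ℕ) : Prop :=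
  (∃ L : ℂ, L ≠ 0 ∧ Tendsto (fun t : ℝ => f t / (t : ℂ) ^ k) (𝓝[>] 0) (𝓝 L)) ∧
  ∀ j : ℕ, j < k →
    ¬ ∃ L : ℂ, L ≠ 0 ∧ Tendsto (fun t : ℝ => f t / (t : ℂ) ^ j) (𝓝[>] 0) (𝓝 L)

open Asymptotics Set

section NormedSpace

variable {E : Type*} [NormedAddCommGroup E] [NormedSpace ℝ E]

theorem norm_le_mul_of_tendsto_nhdsGT_zero_of_norm_deriv_le {g : ℝ → E} {C t : ℝ} (ht : 0 < t)
    (hg : Tendsto g (𝓝[>] 0) (𝓝 0)) (hdiff : ∀ x ∈ Ioc 0 t, DifferentiableAt ℝ g x)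
    (hbound : ∀ x ∈ Ioc 0 t, ‖deriv g x‖ ≤ C) : ‖g t‖ ≤ C * t := by
  have hC : 0 ≤ C := (norm_nonneg _).trans (hbound t ⟨ht, le_rfl⟩)
  have hlim : Tendsto (fun s => ‖g t - g s‖) (𝓝[>] 0) (𝓝 ‖g t‖) := by
    simpa using (tendsto_const_nhds.sub hg).norm
  refine le_of_tendsto hlim ?_
  filter_upwards [Ioo_mem_nhdsGT ht] with s hs
  have hsub : Icc s t ⊆ Ioc 0 t := Icc_subset_Ioc_iff hs.2.le |>.2 ⟨hs.1, le_rfl⟩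
  calc ‖g t - g s‖ ≤ C * ‖t - s‖ :=
        (convex_Icc s t).norm_image_sub_le_of_norm_deriv_le (fun x hx => hdiff x (hsub hx))
          (fun x hx => hbound x (hsub hx)) (left_mem_Icc.2 hs.2.le) (right_mem_Icc.2 hs.2.le)
    _ ≤ C * t := by
        rw [Real.norm_of_nonneg (by linarith [hs.2])]
        exact mul_le_mul_of_nonneg_left (by linarith [hs.1]) hC

theorem isLittleO_pow_succ_of_isLittleO_deriv {g : ℝ → E} {ε : ℝ} (hε : 0 < ε)
    (hdiff : ∀ x ∈ Ioo 0 ε, DifferentiableAt ℝ g x) (hg : Tendsto g (𝓝[>] 0) (𝓝 0)) {j : ℕ}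
    (hderiv : deriv g =o[𝓝[>] 0] fun x => x ^ j) : g =o[𝓝[>] 0] fun x => x ^ (j + 1) := by
  refine IsLittleO.of_bound fun c hc => ?_
  obtain ⟨a, ha, hbound⟩ := (nhdsGT_basis (0 : ℝ)).eventually_iff.mp (hderiv.def hc)
  filter_upwards [Ioo_mem_nhdsGT (lt_min ha hε)] with t ht
  have htε : t < ε := ht.2.trans_le (min_le_right _ _)
  have key : ‖g t‖ ≤ c * t ^ j * t := by
    refine norm_le_mul_of_tendsto_nhdsGT_zero_of_norm_deriv_le ht.1 hg
      (fun x hx => hdiff x ⟨hx.1, hx.2.trans_lt htε⟩) fun x hx => ?_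
    calc ‖deriv g x‖ ≤ c * ‖x ^ j‖ :=
          hbound ⟨hx.1, hx.2.trans_lt (ht.2.trans_le (min_le_left _ _))⟩
      _ ≤ c * t ^ j := by
        rw [norm_pow, Real.norm_of_nonneg hx.1.le]
        exact mul_le_mul_of_nonneg_left (pow_le_pow_left₀ hx.1.le hx.2 j) hc.le
  rw [norm_pow, Real.norm_of_nonneg ht.1.le, pow_succ, ← mul_assoc]
  exact key

end NormedSpace

theorem tendsto_zero_of_tendsto_div_pow {f : ℝ → ℂ} {k : ℕ} {M : ℂ} (hk : k ≠ 0)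
    (hf : Tendsto (fun t : ℝ => f t / (t : ℂ) ^ k) (𝓝[>] 0) (𝓝 M)) :
    Tendsto f (𝓝[>] 0) (𝓝 0) := by
  have hpow : Tendsto (fun t : ℝ => (t : ℂ) ^ k) (𝓝[>] 0) (𝓝 0) :=
    ((by fun_prop : Continuous fun t : ℝ => (t : ℂ) ^ k).tendsto' 0 0 (by simp [hk])).mono_left
      nhdsWithin_le_nhds
  refine (mul_zero M ▸ hf.mul hpow).congr' ?_
  filter_upwards [self_mem_nhdsWithin] with t (ht : 0 < t)
  have : (t : ℂ) ^ k ≠ 0 := pow_ne_zero _ (Complex.ofReal_ne_zero.2 ht.ne')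
  field_simp

theorem isTheta_ofReal_pow (l : Filter ℝ) (n : ℕ) :
    (fun t : ℝ => (t : ℂ) ^ n) =Θ[l] fun t => t ^ n :=
  IsTheta.of_norm_eventuallyEq_norm (Filter.Eventually.of_forall fun t => by simp)

theorem tendsto_div_pow_succ_of_tendsto_deriv_div_pow {f : ℝ → ℂ} {ε : ℝ} (hε : 0 < ε)
    (hdiff : ∀ t ∈ Ioo 0 ε, DifferentiableAt ℝ f t) (hf : Tendsto f (𝓝[>] 0) (𝓝 0))
    {j : ℕ} {C : ℂ} (hC : Tendsto (fun t : ℝ => deriv f t / (t : ℂ) ^ j) (𝓝[>] 0) (𝓝 C)) :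
    Tendsto (fun t : ℝ => f t / (t : ℂ) ^ (j + 1)) (𝓝[>] 0) (𝓝 (C / (j + 1))) := by
  have hj : (j + 1 : ℂ) ≠ 0 := Nat.cast_add_one_ne_zero j
  have hpow_ne : ∀ᶠ t : ℝ in 𝓝[>] 0, ∀ n : ℕ, (t : ℂ) ^ n ≠ 0 := by
    filter_upwards [self_mem_nhdsWithin] with t (ht : 0 < t) n
    exact pow_ne_zero _ (Complex.ofReal_ne_zero.2 ht.ne')
  set P : ℝ → ℂ := fun t => C / (j + 1) * (t : ℂ) ^ (j + 1)
  have hP : ∀ t : ℝ, HasDerivAt P (C * (t : ℂ) ^ j) t := by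
    intro t
    have hpow : HasDerivAt (fun s : ℝ => (s : ℂ) ^ (j + 1)) ((j + 1) * (t : ℂ) ^ j) t := by
      simpa using (hasDerivAt_pow (j + 1) (t : ℂ)).comp_ofReal
    simpa only [← mul_assoc, div_mul_cancel₀ C hj] using hpow.const_mul (C / (j + 1))
  set g : ℝ → ℂ := fun t => f t - P t
  have hg_deriv : ∀ t ∈ Ioo 0 ε, HasDerivAt g (deriv f t - C * (t : ℂ) ^ j) t := fun t ht =>
    (hdiff t ht).hasDerivAt.fun_sub (hP t)
  have hg : Tendsto g (𝓝[>] 0) (𝓝 0) := by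
    have hP_cont : Continuous P := continuous_iff_continuousAt.2 fun t => (hP t).continuousAt
    simpa [P] using hf.sub ((hP_cont.tendsto 0).mono_left nhdsWithin_le_nhds)
  have hg_deriv_o : deriv g =o[𝓝[>] 0] fun t => t ^ j := by
    have h : (fun t : ℝ => deriv f t - C * (t : ℂ) ^ j) =o[𝓝[>] 0] fun t => (t : ℂ) ^ j := by
      refine (isLittleO_iff_tendsto' (hpow_ne.mono fun t ht h => (ht j h).elim)).2 ?_
      refine (sub_self C ▸ hC.sub tendsto_const_nhds).congr' ?_
      filter_upwards [hpow_ne] with t ht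
      field_simp [ht j]
    refine (h.trans_isBigO (isTheta_ofReal_pow _ j).isBigO).congr' ?_ EventuallyEq.rfl
    filter_upwards [Ioo_mem_nhdsGT hε] with t ht
    exact (hg_deriv t ht).deriv.symm
  have hg_o := (isLittleO_pow_succ_of_isLittleO_deriv hε
    (fun t ht => (hg_deriv t ht).differentiableAt) hg hg_deriv_o).trans_isBigO
    (isTheta_ofReal_pow _ (j + 1)).symm.isBigO
  refine (zero_add (C / (j + 1)) ▸ hg_o.tendsto_div_nhds_zero.add tendsto_const_nhds).congr' ?_
  filter_upwards [hpow_ne] with t ht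
  simp only [g, P]
  field_simp [ht (j + 1)]
  ring

theorem valuation_deriv (f : ℝ → ℂ) (ε : ℝ) (hε : 0 < ε)
    (hdiff : ∀ t ∈ Set.Ioo 0 ε, DifferentiableAt ℝ f t)
    (k : ℕ) (hk : 1 ≤ k) (hval : HasValuation f k)
    (M : ℂ) (hM : M ≠ 0)
    (hMlim : Tendsto (fun t : ℝ => f t / (t : ℂ) ^ k) (𝓝[>] 0) (𝓝 M))
    (L : ℂ)
    (hLlim : Tendsto (fun t : ℝ => deriv f t / (t : ℂ) ^ (k - 1)) (𝓝[>] 0) (𝓝 L)) :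
    HasValuation (deriv f) (k - 1) ∧ L = (k : ℂ) * M := by
  have hf0 := tendsto_zero_of_tendsto_div_pow (by omega) hMlim
  have hk1 : k - 1 + 1 = k := by omega
  have hL : Tendsto (fun t : ℝ => f t / (t : ℂ) ^ k) (𝓝[>] 0) (𝓝 (L / k)) := by
    simpa [hk1, Nat.cast_sub hk] using
      tendsto_div_pow_succ_of_tendsto_deriv_div_pow hε hdiff hf0 hLlim
  have hkne : (k : ℂ) ≠ 0 := Nat.cast_ne_zero.2 (by omega)
  have hLM : L = k * M := by
    rw [← tendsto_nhds_unique hL hMlim, mul_div_cancel₀ _ hkne]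
  refine ⟨⟨⟨L, hLM ▸ mul_ne_zero hkne hM, hLlim⟩, fun j hj ⟨C, hC, hClim⟩ => ?_⟩, hLM⟩
  exact hval.2 (j + 1) (by omega) ⟨C / (j + 1), div_ne_zero hC (Nat.cast_add_one_ne_zero j),
    tendsto_div_pow_succ_of_tendsto_deriv_div_pow hε hdiff hf0 hClim⟩
end

section
/- A series Σ aₙ of nonnegative real numbers converges if and only if there exists a sequence of positive reals bₙ with bₙ → ∞ such that Σ aₙbₙ converges. -/
open Filter Topology

/-!
With `r n = ∑_{k ≥ n} a k` the tail sums, `a n = r n - r (n + 1) = (√(r n) - √(r (n + 1))) d n`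
where `d n = √(r n) + √(r (n + 1)) → 0`; so with `b n ≈ 1 / d n` the terms `a n * b n` are bounded
by those of the telescoping series `∑ (√(r n) - √(r (n + 1)))`, whose sum is `√(r 0)`.
The converse is comparison: eventually `b n ≥ 1`, so `a n ≤ a n * b n`.
-/

theorem Antitone.hasSum_sub_succ {r : ℕ → ℝ} {l : ℝ} (hr : Antitone r)
    (hl : Tendsto r atTop (𝓝 l)) : HasSum (fun n => r n - r (n + 1)) (r 0 - l) := by
  rw [hasSum_iff_tendsto_nat_of_nonneg (fun n => sub_nonneg.2 (hr n.le_succ))]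
  simpa only [Finset.sum_range_sub'] using hl.const_sub (r 0)

theorem sub_div_le_sqrt_sub_sqrt {x y d : ℝ} (hy : 0 ≤ y) (hyx : y ≤ x) (hd : 0 < d)
    (hsd : √x + √y ≤ d) : (x - y) / d ≤ √x - √y := by
  have hdiff : x - y = (√x - √y) * (√x + √y) := by
    linear_combination Real.sq_sqrt hy - Real.sq_sqrt (hy.trans hyx)
  rw [div_le_iff₀ hd, hdiff]
  exact mul_le_mul_of_nonneg_left hsd (sub_nonneg.2 (Real.sqrt_le_sqrt hyx))

theorem Summable.tsum_nat_add_sub_tsum_nat_add_succ {a : ℕ → ℝ} (hs : Summable a) (n : ℕ) :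
    ∑' k, a (k + n) - ∑' k, a (k + (n + 1)) = a n := by
  rw [((summable_nat_add_iff n).2 hs).tsum_eq_zero_add, zero_add]
  simp only [add_right_comm _ 1 n, add_assoc, add_sub_cancel_right]

theorem Summable.exists_tendsto_atTop_summable_mul {a : ℕ → ℝ} (ha : ∀ n, 0 ≤ a n)
    (hs : Summable a) :
    ∃ b : ℕ → ℝ, (∀ n, 0 < b n) ∧ Tendsto b atTop atTop ∧ Summable (fun n => a n * b n) := by
  set r : ℕ → ℝ := fun n => ∑' k, a (k + n)
  have hr_sub : ∀ n, r n - r (n + 1) = a n := hs.tsum_nat_add_sub_tsum_nat_add_succ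
  have hr_anti : Antitone r := antitone_nat_of_succ_le fun n => by linarith [hr_sub n, ha n]
  have hr0 : Tendsto r atTop (𝓝 0) := tendsto_sum_nat_add a
  have hr_nonneg : ∀ n, 0 ≤ r n := fun n => hr_anti.le_of_tendsto hr0 n
  have hsqrt_anti : Antitone fun n => √(r n) := fun m n hmn => Real.sqrt_le_sqrt (hr_anti hmn)
  have hsqrt0 : Tendsto (fun n => √(r n)) atTop (𝓝 0) := by simpa using hr0.sqrt
  -- the `(1 / 2) ^ n` keeps `d n` positive when the tail vanishes
  set d : ℕ → ℝ := fun n => √(r n) + √(r (n + 1)) + (1 / 2) ^ n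
  have hd_pos : ∀ n, 0 < d n := fun n => by positivity
  have hd0 : Tendsto d atTop (𝓝 0) := by
    have := (hsqrt0.add (hsqrt0.comp (tendsto_add_atTop_nat 1))).add
      (tendsto_pow_atTop_nhds_zero_of_lt_one (r := 1 / 2) (by norm_num) (by norm_num))
    rwa [add_zero, add_zero] at this
  refine ⟨fun n => (d n)⁻¹, fun n => inv_pos.2 (hd_pos n), ?_, ?_⟩
  · exact tendsto_inv_nhdsGT_zero.comp
      (tendsto_nhdsWithin_iff.2 ⟨hd0, Eventually.of_forall hd_pos⟩)
  · refine (hsqrt_anti.hasSum_sub_succ hsqrt0).summable.of_nonneg_of_le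
      (fun n => mul_nonneg (ha n) (inv_pos.2 (hd_pos n)).le) fun n => ?_
    rw [← hr_sub n, ← div_eq_mul_inv]
    exact sub_div_le_sqrt_sub_sqrt (hr_nonneg _) (hr_anti n.le_succ) (hd_pos n)
      (le_add_of_nonneg_right (by positivity))

theorem Summable.of_mul_of_tendsto_atTop {a b : ℕ → ℝ} (ha : ∀ n, 0 ≤ a n)
    (hb : Tendsto b atTop atTop) (hab : Summable fun n => a n * b n) : Summable a :=
  hab.of_norm_bounded_eventually_nat <| (hb.eventually_ge_atTop 1).mono fun n hn => by
    rw [Real.norm_of_nonneg (ha n)]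
    exact le_mul_of_one_le_right (ha n) hn

/-- du Bois-Reymond: no worst convergent series exists. -/
theorem no_worst_converge_iff (a : ℕ → ℝ) (ha : ∀ n, 0 ≤ a n) :
    Summable a ↔
      ∃ b : ℕ → ℝ, (∀ n, 0 < b n) ∧ Tendsto b atTop atTop ∧
        Summable (fun n => a n * b n) :=
  ⟨Summable.exists_tendsto_atTop_summable_mul ha,
    fun ⟨_, _, hb, hab⟩ => hab.of_mul_of_tendsto_atTop ha hb⟩
end

section
/- Let {aₙ}, {bₙ}, {cₙ}, {ξₙ} be nonnegative real sequences and {δₙ} a real sequence such that aₙ → 0, Σ bₙ < ∞, Σ cₙ = ∞, Σ δₙ converges, and for all n beyond some N₀, ξ_{n+1} ≤ max(aₙ, (1+bₙ)·ξₙ + δₙ - cₙ). Then ξₙ → 0. -/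
open Filter Topology

lemma ds_core (a c ξ δ : ℕ → ℝ)
    (hc0 : ∀ n, 0 ≤ c n) (hξ0 : ∀ n, 0 ≤ ξ n)
    (ha : Tendsto a atTop (𝓝 0))
    (hc : Tendsto (fun n => ∑ i ∈ Finset.range n, c i) atTop atTop)
    (hδ : Summable δ)
    (N₀ : ℕ) (hrec : ∀ n ≥ N₀, ξ (n + 1) ≤ max (a n) (ξ n + δ n - c n)) :
    Tendsto ξ atTop (𝓝 0) := by
  set S : ℕ → ℝ := fun n => ∑ i ∈ Finset.range n, δ i with hS
  set C : ℕ → ℝ := fun n => ∑ i ∈ Finset.range n, c i with hC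
  have hScauchy : CauchySeq S := (hδ.hasSum.tendsto_sum_nat).cauchySeq
  have key : ∀ ε > 0, ∃ N, ∀ n ≥ N, ξ n ≤ ε := by
    intro ε hε
    obtain ⟨N₁, hN₁⟩ : ∃ N₁, ∀ n ≥ N₁, a n ≤ ε / 2 := by
      obtain ⟨N₁, hN₁⟩ := Metric.tendsto_atTop.mp ha (ε / 2) (by positivity)
      exact ⟨N₁, fun n hn => by
        have := hN₁ n hn
        rw [Real.dist_eq, sub_zero] at this
        exact le_of_lt (lt_of_le_of_lt (le_abs_self _) this)⟩
    obtain ⟨N₂, hN₂⟩ := Metric.cauchySeq_iff'.mp hScauchy (ε / 4) (by positivity)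
    have hSdiff : ∀ m ≥ N₂, ∀ n ≥ N₂, |S n - S m| ≤ ε / 2 := by
      intro m hm n hn
      have h1 := hN₂ n hn
      have h2 := hN₂ m hm
      rw [Real.dist_eq] at h1 h2
      have : S n - S m = (S n - S N₂) - (S m - S N₂) := by ring
      rw [this]
      calc |(S n - S N₂) - (S m - S N₂)| ≤ |S n - S N₂| + |S m - S N₂| := abs_sub _ _
        _ ≤ ε / 4 + ε / 4 := by linarith [le_of_lt h1, le_of_lt h2]
        _ = ε / 2 := by ring
    set N : ℕ := max N₀ (max N₁ N₂) with hN
    have hNN₀ : N₀ ≤ N := le_max_left _ _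
    have hNN₁ : N₁ ≤ N := le_trans (le_max_left _ _) (le_max_right _ _)
    have hNN₂ : N₂ ≤ N := le_trans (le_max_right _ _) (le_max_right _ _)
    -- there is a reset index n₁ ≥ N
    have hreset : ∃ n₁, N ≤ n₁ ∧ ξ (n₁ + 1) ≤ a n₁ := by
      by_contra h
      push_neg at h
      have hstep : ∀ n ≥ N, ξ (n + 1) ≤ ξ n + δ n - c n := by
        intro n hn
        exact (le_max_iff.mp (hrec n (le_trans hNN₀ hn))).resolve_left
          (not_le.mpr (h n hn))
      have hind : ∀ n ≥ N, ξ n ≤ ξ N + (S n - S N) - (C n - C N) := by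
        intro n hn
        induction n, hn using Nat.le_induction with
        | base => simp
        | succ n hn ih =>
          have h1 := hstep n hn
          have hSn : S (n + 1) = S n + δ n := Finset.sum_range_succ δ n
          have hCn : C (n + 1) = C n + c n := Finset.sum_range_succ c n
          rw [hSn, hCn]; linarith
      obtain ⟨n, hn1, hn2⟩ :
          ∃ n, N ≤ n ∧ C N + ξ N + ε ≤ C n := by
        have := (hc.eventually_ge_atTop (C N + ξ N + ε)).and (eventually_ge_atTop N)
        obtain ⟨n, h1, h2⟩ := this.exists
        exact ⟨n, h2, h1⟩
      have h1 := hind n hn1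
      have h2 := hSdiff N hNN₂ n (le_trans hNN₂ hn1)
      have h3 := abs_le.mp h2
      have := hξ0 n
      linarith [h3.2]
    obtain ⟨n₁, hn₁N, hn₁⟩ := hreset
    refine ⟨n₁ + 1, ?_⟩
    have main : ∀ n ≥ n₁ + 1, ∃ m, n₁ + 1 ≤ m ∧ m ≤ n ∧ ξ m ≤ ε / 2 ∧
        ξ n ≤ ξ m + (S n - S m) := by
      intro n hn
      induction n, hn using Nat.le_induction with
      | base =>
        exact ⟨n₁ + 1, le_refl _, le_refl _,
          le_trans hn₁ (hN₁ n₁ (le_trans hNN₁ hn₁N)), by simp⟩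
      | succ n hn ih =>
        obtain ⟨m, hm1, hm2, hm3, hm4⟩ := ih
        have hnN₀ : N₀ ≤ n := le_trans hNN₀ (le_trans (le_trans hn₁N (Nat.le_succ n₁)) hn)
        rcases le_max_iff.mp (hrec n hnN₀) with h | h
        · exact ⟨n + 1, le_trans hn (Nat.le_succ n), le_refl _,
            le_trans h (hN₁ n (le_trans hNN₁ (le_trans (le_trans hn₁N (Nat.le_succ n₁)) hn))), by simp⟩
        · refine ⟨m, hm1, le_trans hm2 (Nat.le_succ n), hm3, ?_⟩
          have hSn : S (n + 1) = S n + δ n := Finset.sum_range_succ δ n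
          have hcn := hc0 n
          rw [hSn]; linarith
    refine fun n hn => ?_
    obtain ⟨m, hm1, hm2, hm3, hm4⟩ := main n hn
    have hmN₂ : N₂ ≤ m := le_trans hNN₂ (le_trans (le_trans hn₁N (Nat.le_succ n₁)) hm1)
    have hnN₂ : N₂ ≤ n := le_trans hmN₂ hm2
    have h2 := (abs_le.mp (hSdiff m hmN₂ n hnN₂)).2
    linarith
  rw [Metric.tendsto_atTop]
  intro ε hε
  obtain ⟨N, hN⟩ := key (ε / 2) (by positivity)
  refine ⟨N, fun n hn => ?_⟩
  rw [Real.dist_eq, sub_zero, abs_of_nonneg (hξ0 n)]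
  linarith [hN n hn]
/-- The Derman–Sacks lemma. -/
theorem derman_sacks_lemma (a b c ξ δ : ℕ → ℝ)
    (ha0 : ∀ n, 0 ≤ a n) (hb0 : ∀ n, 0 ≤ b n) (hc0 : ∀ n, 0 ≤ c n)
    (hξ0 : ∀ n, 0 ≤ ξ n)
    (ha : Tendsto a atTop (𝓝 0))
    (hb : Summable b)
    (hc : Tendsto (fun n => ∑ i ∈ Finset.range n, c i) atTop atTop)
    (hδ : Summable δ)
    (hrec : ∃ N₀ : ℕ, ∀ n ≥ N₀, ξ (n + 1) ≤ max (a n) ((1 + b n) * ξ n + δ n - c n)) :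
    Tendsto ξ atTop (𝓝 0) := by
  obtain ⟨N₀, hrec⟩ := hrec
  -- Boundedness of ξ.
  set L : ℝ := ∑' n, δ n with hL
  set T : ℕ → ℝ := fun n => L - ∑ i ∈ Finset.range n, δ i with hTdef
  have hδn : ∀ n, δ n = T n - T (n + 1) := by
    intro n
    simp only [hTdef, Finset.sum_range_succ]
    ring
  have hT0 : Tendsto T atTop (𝓝 0) := by
    have := hδ.hasSum.tendsto_sum_nat
    have h := this.const_sub L
    have h0 : L - ∑' i, δ i = 0 := sub_self _
    rw [h0] at h; exact h
  obtain ⟨Tb, hTb0, hTb⟩ : ∃ Tb, 0 ≤ Tb ∧ ∀ n, |T n| ≤ Tb := by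
    obtain ⟨M, hM⟩ := Metric.tendsto_atTop.mp hT0 1 one_pos
    have hs0 : (0:ℝ) ≤ ∑ i ∈ Finset.range M, |T i| :=
      Finset.sum_nonneg fun i _ => abs_nonneg _
    refine ⟨1 + ∑ i ∈ Finset.range M, |T i|, by linarith, fun n => ?_⟩
    rcases le_or_gt M n with h | h
    · have := hM n h
      rw [Real.dist_eq, sub_zero] at this
      have hs : (0:ℝ) ≤ ∑ i ∈ Finset.range M, |T i| :=
        Finset.sum_nonneg fun i _ => abs_nonneg _
      linarith
    · have : |T n| ≤ ∑ i ∈ Finset.range M, |T i| :=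
        Finset.single_le_sum (f := fun i => |T i|) (fun i _ => abs_nonneg _)
          (Finset.mem_range.mpr h)
      linarith
  obtain ⟨A, hA0, hA⟩ : ∃ A, 0 ≤ A ∧ ∀ n, a n ≤ A := by
    obtain ⟨M, hM⟩ := Metric.tendsto_atTop.mp ha 1 one_pos
    have hs0 : (0:ℝ) ≤ ∑ i ∈ Finset.range M, a i :=
      Finset.sum_nonneg fun i _ => ha0 i
    refine ⟨1 + ∑ i ∈ Finset.range M, a i, by linarith, fun n => ?_⟩
    rcases le_or_gt M n with h | h
    · have := hM n h
      rw [Real.dist_eq, sub_zero] at this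
      have h2 := le_of_lt (lt_of_le_of_lt (le_abs_self _) this)
      have hs : (0:ℝ) ≤ ∑ i ∈ Finset.range M, a i :=
        Finset.sum_nonneg fun i _ => ha0 i
      linarith
    · have : a n ≤ ∑ i ∈ Finset.range M, a i :=
        Finset.single_le_sum (f := fun i => a i) (fun i _ => ha0 i)
          (Finset.mem_range.mpr h)
      linarith
  set η : ℕ → ℝ := fun n => ξ n + T n with hηdef
  set M₀ : ℝ := max (η N₀) (A + Tb) with hM₀
  have hM₀nn : 0 ≤ M₀ + Tb := by
    have : A + Tb ≤ M₀ := le_max_right _ _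
    linarith
  set P : ℕ → ℝ := fun n => ∏ i ∈ Finset.Ico N₀ n, (1 + b i) with hPdef
  have hP1 : ∀ n, 1 ≤ P n := by
    intro n
    show (1:ℝ) ≤ ∏ i ∈ Finset.Ico N₀ n, (1 + b i)
    calc (1:ℝ) = ∏ i ∈ Finset.Ico N₀ n, (1:ℝ) := by simp
      _ ≤ ∏ i ∈ Finset.Ico N₀ n, (1 + b i) :=
          Finset.prod_le_prod (by simp) (fun i _ => by linarith [hb0 i])
  have hPexp : ∀ n, P n ≤ Real.exp (∑' i, b i) := by
    intro n
    calc P n ≤ ∏ i ∈ Finset.Ico N₀ n, Real.exp (b i) :=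
          Finset.prod_le_prod (fun i _ => by linarith [hb0 i])
            (fun i _ => by linarith [Real.add_one_le_exp (b i)])
      _ = Real.exp (∑ i ∈ Finset.Ico N₀ n, b i) := by
          rw [Real.exp_sum]
      _ ≤ Real.exp (∑' i, b i) := by
          apply Real.exp_le_exp.mpr
          exact Summable.sum_le_tsum _ (fun i _ => hb0 i) hb
  have hηbound : ∀ n ≥ N₀, η n ≤ (M₀ + Tb) * P n - Tb := by
    intro n hn
    induction n, hn using Nat.le_induction with
    | base =>
      have : P N₀ = 1 := by simp [hPdef]
      rw [this]
      have : η N₀ ≤ M₀ := le_max_left _ _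
      linarith
    | succ n hn ih =>
      have hPsucc : P (n + 1) = P n * (1 + b n) :=
        Finset.prod_Ico_succ_top hn _
      have hP1' := hP1 (n + 1)
      rcases le_max_iff.mp (hrec n hn) with h | h
      · -- reset branch
        have h1 : η (n + 1) ≤ A + Tb := by
          have := hA n
          have := abs_le.mp (hTb (n + 1))
          simp only [hηdef]
          linarith [h, this.2]
        have h2 : A + Tb ≤ M₀ := le_max_right _ _
        have h3 : M₀ + Tb ≤ (M₀ + Tb) * P (n + 1) :=
          le_mul_of_one_le_right hM₀nn hP1'
        linarith
      · -- contraction branch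
        have hξη : ξ n ≤ η n + Tb := by
          have := (abs_le.mp (hTb n)).2
          have := (abs_le.mp (hTb n)).1
          simp only [hηdef]
          linarith
        have h1 : η (n + 1) ≤ (1 + b n) * η n + b n * Tb := by
          have hδe := hδn n
          have hbn := hb0 n
          have hcn := hc0 n
          have hmul : b n * ξ n ≤ b n * (η n + Tb) :=
            mul_le_mul_of_nonneg_left hξη hbn
          simp only [hηdef] at *
          nlinarith [h]
        have h2 : (1 + b n) * η n ≤ (1 + b n) * ((M₀ + Tb) * P n - Tb) :=
          mul_le_mul_of_nonneg_left ih (by linarith [hb0 n])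
        have hbn := hb0 n
        rw [hPsucc]
        nlinarith
  set K : ℝ := max ((M₀ + Tb) * Real.exp (∑' i, b i)) (∑ i ∈ Finset.range N₀, ξ i) with hK
  have hξK : ∀ n, ξ n ≤ K := by
    intro n
    rcases le_or_gt N₀ n with h | h
    · have h1 := hηbound n h
      have h2 : (M₀ + Tb) * P n ≤ (M₀ + Tb) * Real.exp (∑' i, b i) :=
        mul_le_mul_of_nonneg_left (hPexp n) hM₀nn
      have h3 := (abs_le.mp (hTb n)).1
      have : ξ n ≤ (M₀ + Tb) * Real.exp (∑' i, b i) := by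
        simp only [hηdef] at h1
        linarith
      exact le_trans this (le_max_left _ _)
    · have : ξ n ≤ ∑ i ∈ Finset.range N₀, ξ i :=
        Finset.single_le_sum (f := fun i => ξ i) (fun i _ => hξ0 i)
          (Finset.mem_range.mpr h)
      exact le_trans this (le_max_right _ _)
  -- Reduce to the b = 0 case.
  apply ds_core a c ξ (fun n => δ n + K * b n) hc0 hξ0 ha hc
    (hδ.add (hb.mul_left K)) N₀
  intro n hn
  refine le_trans (hrec n hn) (max_le_max (le_refl _) ?_)
  have h1 : b n * ξ n ≤ b n * K := mul_le_mul_of_nonneg_left (hξK n) (hb0 n)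
  nlinarith
end
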